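/- arXiv:2210.03955 — 7 statements merged into one kernel-verified Lean document; each statement's English description precedes it below -/
import Mathlib

section
/- Let V be a finite-dimensional vector space over a field F, let u be an endomorphism of V, and let a₁, a₂ be endomorphisms with a₁² = 0, a₂² = 0 and u = a₁ + a₂. Then for every natural number k, the subspaces Ker(u^k) and Im(u^k) are invariant under a₁ and under a₂. -/
/-! With `u = a₁ + a₂` and `a₁² = a₂² = 0`, both `a₁ * u` and `u * a₂` equal `a₁ * a₂`, so `u`
intertwines `a₁` and `a₂`: `a₁ * u = u * a₂` and `a₂ * u = u * a₁`. Pushing `a₁` across `u ^ k`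
therefore turns it into `a₁` or `a₂`, from either side: `a₁ * u ^ k = u ^ k * c` and
`u ^ k * a₁ = d * u ^ k`. The first identity makes `Im (u ^ k)` invariant, the second `Ker (u ^ k)`. -/

lemma mul_add_eq_add_mul_of_sq_eq_zero {R : Type*} [Semiring R] {a b : R}
    (ha : a ^ 2 = 0) (hb : b ^ 2 = 0) : a * (a + b) = (a + b) * b := by
  rw [mul_add, add_mul, ← sq, ← sq, ha, hb, zero_add, add_zero]

section Intertwining

variable {M : Type*} [Monoid M]

lemma exists_mul_pow_eq_pow_mul_of_intertwine {u : M} (k : ℕ) :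
    ∀ {a b : M}, a * u = u * b → b * u = u * a → ∃ c, a * u ^ k = u ^ k * c := by
  induction k with
  | zero => exact fun {a _} _ _ => ⟨a, by simp⟩
  | succ k ih =>
    intro a b hab hba
    obtain ⟨c, hc⟩ := ih hba hab
    exact ⟨c, by rw [pow_succ', ← mul_assoc, hab, mul_assoc, hc, mul_assoc]⟩

lemma exists_pow_mul_eq_mul_pow_of_intertwine {u : M} (k : ℕ) :
    ∀ {a b : M}, a * u = u * b → b * u = u * a → ∃ d, u ^ k * a = d * u ^ k := by
  induction k with
  | zero => exact fun {a _} _ _ => ⟨a, by simp⟩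
  | succ k ih =>
    intro a b hab hba
    obtain ⟨d, hd⟩ := ih hba hab
    exact ⟨d, by rw [pow_succ, mul_assoc, ← hba, ← mul_assoc, hd, mul_assoc]⟩

end Intertwining

section Invariance

variable {R M : Type*} [Semiring R] [AddCommMonoid M] [Module R M]

lemma Module.End.map_range_le_of_mul_eq {a p c : Module.End R M} (h : a * p = p * c) :
    (LinearMap.range p).map a ≤ LinearMap.range p := by
  rw [← LinearMap.range_comp, ← Module.End.mul_eq_comp, h]
  exact LinearMap.range_comp_le_range c p

lemma Module.End.map_ker_le_of_mul_eq {a p d : Module.End R M} (h : p * a = d * p) :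
    (LinearMap.ker p).map a ≤ LinearMap.ker p := by
  rw [Submodule.map_le_iff_le_comap, ← LinearMap.ker_comp, ← Module.End.mul_eq_comp, h]
  exact LinearMap.ker_le_ker_comp p d

end Invariance

theorem ker_range_pow_stable_of_square_zero_summands_general
    {F V : Type*} [Field F] [AddCommGroup V] [Module F V]
    (u a₁ a₂ : Module.End F V)
    (h1 : a₁ ^ 2 = 0) (h2 : a₂ ^ 2 = 0) (hu : u = a₁ + a₂) (k : ℕ) :
    (LinearMap.ker (u ^ k)).map a₁ ≤ LinearMap.ker (u ^ k) ∧
    (LinearMap.ker (u ^ k)).map a₂ ≤ LinearMap.ker (u ^ k) ∧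
    (LinearMap.range (u ^ k)).map a₁ ≤ LinearMap.range (u ^ k) ∧
    (LinearMap.range (u ^ k)).map a₂ ≤ LinearMap.range (u ^ k) := by
  have h12 : a₁ * u = u * a₂ := hu ▸ mul_add_eq_add_mul_of_sq_eq_zero h1 h2
  have h21 : a₂ * u = u * a₁ := by
    rw [hu, add_comm]; exact mul_add_eq_add_mul_of_sq_eq_zero h2 h1
  obtain ⟨d₁, hd₁⟩ := exists_pow_mul_eq_mul_pow_of_intertwine k h12 h21
  obtain ⟨d₂, hd₂⟩ := exists_pow_mul_eq_mul_pow_of_intertwine k h21 h12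
  obtain ⟨c₁, hc₁⟩ := exists_mul_pow_eq_pow_mul_of_intertwine k h12 h21
  obtain ⟨c₂, hc₂⟩ := exists_mul_pow_eq_pow_mul_of_intertwine k h21 h12
  exact ⟨Module.End.map_ker_le_of_mul_eq hd₁, Module.End.map_ker_le_of_mul_eq hd₂,
    Module.End.map_range_le_of_mul_eq hc₁, Module.End.map_range_le_of_mul_eq hc₂⟩

/-- If `u = a₁ + a₂` with `a₁² = a₂² = 0`, then for every `k`, the subspaces
`Ker (u^k)` and `Im (u^k)` are invariant under `a₁` and `a₂`. -/
theorem ker_range_pow_stable_of_square_zero_summands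
    {F V : Type*} [Field F] [AddCommGroup V] [Module F V] [FiniteDimensional F V]
    (u a₁ a₂ : Module.End F V)
    (h1 : a₁ ^ 2 = 0) (h2 : a₂ ^ 2 = 0) (hu : u = a₁ + a₂) (k : ℕ) :
    (LinearMap.ker (u ^ k)).map a₁ ≤ LinearMap.ker (u ^ k) ∧
    (LinearMap.ker (u ^ k)).map a₂ ≤ LinearMap.ker (u ^ k) ∧
    (LinearMap.range (u ^ k)).map a₁ ≤ LinearMap.range (u ^ k) ∧
    (LinearMap.range (u ^ k)).map a₂ ≤ LinearMap.range (u ^ k) :=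
  ker_range_pow_stable_of_square_zero_summands_general u a₁ a₂ h1 h2 hu k
end

section
/- Let V be a finite-dimensional vector space over a field F of characteristic ≠ 2, equipped with a non-degenerate symmetric bilinear form b, and let u be a b-selfadjoint endomorphism of V. If u = a₁ + a₂ with a₁² = a₂² = 0 and both a₁, a₂ b-selfadjoint, then u is similar to −u. -/
section Helpers
open Polynomial

variable {F : Type*} [Field F]

/-- The `F`-linear "X ↦ -X" twist on a quotient `F[X] ⧸ I` for a σ-invariant ideal. -/
noncomputable def qtwist (I : Submodule F[X] F[X])
    (hI : ∀ r ∈ I, aeval (-X : F[X]) r ∈ I) :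
    (F[X] ⧸ I) →ₗ[F] (F[X] ⧸ I) :=
  (Submodule.Quotient.restrictScalarsEquiv F I).toLinearMap ∘ₗ
    (Submodule.mapQ (I.restrictScalars F) (I.restrictScalars F)
      (aeval (-X : F[X])).toLinearMap hI) ∘ₗ
    (Submodule.Quotient.restrictScalarsEquiv F I).symm.toLinearMap

lemma qtwist_mk (I : Submodule F[X] F[X]) (hI : ∀ r ∈ I, aeval (-X : F[X]) r ∈ I) (r : F[X]) :
    qtwist I hI (Submodule.Quotient.mk r) = Submodule.Quotient.mk (aeval (-X : F[X]) r) := by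
  rfl

lemma aeval_negX_negX (r : F[X]) : aeval (-X : F[X]) (aeval (-X : F[X]) r) = r := by
  rw [← Polynomial.aeval_algHom_apply (aeval (-X : F[X])) (-X : F[X]) r]
  simp

lemma qtwist_qtwist (I : Submodule F[X] F[X]) (hI : ∀ r ∈ I, aeval (-X : F[X]) r ∈ I) (x) :
    qtwist I hI (qtwist I hI x) = x := by
  obtain ⟨r, rfl⟩ := Submodule.Quotient.mk_surjective I x
  rw [qtwist_mk, qtwist_mk, aeval_negX_negX]

/-- as an equiv -/
noncomputable def qtwistEquiv (I : Submodule F[X] F[X])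
    (hI : ∀ r ∈ I, aeval (-X : F[X]) r ∈ I) : (F[X] ⧸ I) ≃ₗ[F] (F[X] ⧸ I) :=
  LinearEquiv.ofLinear (qtwist I hI) (qtwist I hI)
    (LinearMap.ext fun x => qtwist_qtwist I hI x) (LinearMap.ext fun x => qtwist_qtwist I hI x)

lemma qtwist_X_smul (I : Submodule F[X] F[X]) (hI : ∀ r ∈ I, aeval (-X : F[X]) r ∈ I)
    (y : F[X] ⧸ I) : qtwist I hI ((X : F[X]) • y) = -((X : F[X]) • qtwist I hI y) := by
  obtain ⟨r, rfl⟩ := Submodule.Quotient.mk_surjective I y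
  have : (X : F[X]) • Submodule.Quotient.mk (p := I) r = Submodule.Quotient.mk (X * r) := by
    rw [← Submodule.Quotient.mk_smul]; rfl
  rw [this, qtwist_mk, qtwist_mk]
  have h2 : (X : F[X]) • Submodule.Quotient.mk (p := I) (aeval (-X : F[X]) r)
      = Submodule.Quotient.mk (X * aeval (-X : F[X]) r) := by
    rw [← Submodule.Quotient.mk_smul]; rfl
  rw [h2, ← Submodule.Quotient.mk_neg]
  congr 1
  rw [map_mul]
  simp

open DirectSum in
noncomputable def dstwist {ι : Type*} [DecidableEq ι] (I : ι → Submodule F[X] F[X])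
    (hI : ∀ i, ∀ r ∈ I i, aeval (-X : F[X]) r ∈ I i) :
    (⨁ i, F[X] ⧸ I i) ≃ₗ[F] (⨁ i, F[X] ⧸ I i) :=
  DFinsupp.mapRange.linearEquiv (fun i => qtwistEquiv (I i) (hI i))

open DirectSum in
lemma dstwist_X_smul {ι : Type*} [DecidableEq ι] (I : ι → Submodule F[X] F[X])
    (hI : ∀ i, ∀ r ∈ I i, aeval (-X : F[X]) r ∈ I i) (d : ⨁ i, F[X] ⧸ I i) :
    dstwist I hI ((X : F[X]) • d) = -((X : F[X]) • dstwist I hI d) := by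
  refine DFinsupp.ext fun j => ?_
  simp only [dstwist, DFinsupp.mapRange.linearEquiv_apply, DFinsupp.mapRange_apply,
    DFinsupp.smul_apply, DFinsupp.neg_apply]
  exact qtwist_X_smul (I j) (hI j) (d j)

lemma twist_mem_span {p : F[X]} (hp : Irreducible p) (e n : ℕ) (hdvd : p ^ e ∣ X ^ n) :
    ∀ r ∈ (Submodule.span F[X] {p ^ e} : Submodule F[X] F[X]),
      aeval (-X : F[X]) r ∈ (Submodule.span F[X] {p ^ e} : Submodule F[X] F[X]) := by
  have hassoc : Associated (p ^ e) (X ^ e) := by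
    rcases Nat.eq_zero_or_pos e with rfl | he
    · simp
    · have hpX : p ∣ X := by
        have hprime : Prime p := hp.prime
        exact hprime.dvd_of_dvd_pow (dvd_trans (dvd_pow_self p he.ne') hdvd)
      exact Associated.pow_pow (hp.associated_of_dvd Polynomial.irreducible_X hpX)
  intro r hr
  have hspan : (Submodule.span F[X] {p ^ e} : Submodule F[X] F[X]) = Submodule.span F[X] {X ^ e} :=
    Ideal.span_singleton_eq_span_singleton.mpr hassoc
  rw [hspan] at hr ⊢
  rw [Ideal.submodule_span_eq, Ideal.mem_span_singleton] at hr ⊢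
  obtain ⟨a, rfl⟩ := hr
  rw [map_mul, map_pow, aeval_X, neg_pow]
  exact Dvd.dvd.mul_right (Dvd.intro_left _ rfl) _

universe uF uV

open Module in
theorem nilpotent_similar_neg {F : Type uF} {V : Type uV} [Field F] [AddCommGroup V] [Module F V]
    [FiniteDimensional F V] (u : Module.End F V) (hnil : IsNilpotent u) :
    ∃ φ : V ≃ₗ[F] V, ∀ x, φ (u x) = -u (φ x) := by
  classical
  obtain ⟨n, hn⟩ := hnil
  set M := Module.AEval' u with hM
  -- every element of M is killed by X ^ n
  have hkillM : ∀ m : M, (X ^ n : F[X]) • m = 0 := by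
    intro m
    apply (Module.AEval'.of u).symm.injective
    rw [Module.AEval.of_symm_smul]
    simp [map_pow, hn]
  -- pass to ULift to fix universes
  let L := ULift.{uF} M
  haveI : Module.Finite F[X] L := Module.Finite.equiv (ULift.moduleEquiv (R := F[X]) (M := M)).symm
  have hkill : ∀ z : L, (X ^ n : F[X]) • z = 0 := by
    intro z
    ext
    exact hkillM z.down
  have htor : Module.IsTorsion F[X] L := by
    intro z
    refine ⟨⟨X ^ n, mem_nonZeroDivisors_of_ne_zero (pow_ne_zero _ Polynomial.X_ne_zero)⟩, hkill z⟩
  obtain ⟨ι, hfin, p, hirr, e, ⟨g⟩⟩ := Module.equiv_directSum_of_isTorsion htor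
  haveI := hfin
  -- each p i ^ e i divides X ^ n
  have hdvd : ∀ i, p i ^ e i ∣ X ^ n := by
    intro i
    set d := DirectSum.of (fun i => F[X] ⧸ (F[X] ∙ p i ^ e i)) i (Submodule.Quotient.mk 1) with hd
    have h0 : (X ^ n : F[X]) • d = 0 := by
      have := congrArg g (hkill (g.symm d))
      rw [map_smul, g.apply_symm_apply, map_zero] at this
      exact this
    have h1 : ((X ^ n : F[X]) • d) i = 0 := by rw [h0]; rfl
    rw [DFinsupp.smul_apply, hd, DirectSum.of_eq_same, ← Submodule.Quotient.mk_smul,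
      smul_eq_mul, mul_one, Submodule.Quotient.mk_eq_zero] at h1
    rwa [Ideal.submodule_span_eq, Ideal.mem_span_singleton] at h1
  -- the twist on the direct sum
  have hinv : ∀ i, ∀ r ∈ (Submodule.span F[X] {p i ^ e i} : Submodule F[X] F[X]),
      aeval (-X : F[X]) r ∈ (Submodule.span F[X] {p i ^ e i} : Submodule F[X] F[X]) :=
    fun i => twist_mem_span (hirr i) (e i) n (hdvd i)
  let Ψ := dstwist (fun i => (F[X] ∙ p i ^ e i)) hinv
  -- restrict g to an F-linear equiv
  let gF := g.restrictScalars F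
  let upF := (ULift.moduleEquiv (R := F[X]) (M := M)).restrictScalars F
  -- core equiv on M
  let Φcore : M ≃ₗ[F] M := upF.symm.trans (gF.trans (Ψ.trans (gF.symm.trans upF)))
  have hΦcore : ∀ m : M, Φcore ((X : F[X]) • m) = -((X : F[X]) • Φcore m) := by
    intro m
    show upF (gF.symm (Ψ (gF (upF.symm ((X:F[X]) • m))))) = _
    have h1 : upF.symm ((X:F[X]) • m) = (X:F[X]) • upF.symm m := by
      ext
      rfl
    have h2 : gF ((X:F[X]) • upF.symm m) = (X:F[X]) • gF (upF.symm m) := g.map_smul _ _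
    rw [h1, h2, dstwist_X_smul, map_neg, map_neg]
    rw [show gF.symm ((X:F[X]) • Ψ (gF (upF.symm m))) = (X:F[X]) • gF.symm (Ψ (gF (upF.symm m)))
      from g.symm.map_smul _ _]
    rfl
  -- transport along of
  refine ⟨(Module.AEval'.of u).trans (Φcore.trans (Module.AEval'.of u).symm), fun x => ?_⟩
  show (Module.AEval'.of u).symm (Φcore (Module.AEval'.of u (u x))) = _
  rw [← Module.AEval'.X_smul_of, hΦcore, map_neg, Module.AEval.of_symm_X_smul]
  rfl

end Helpers



/-- Over a field of characteristic ≠ 2, if `u` is a `b`-selfadjoint endomorphism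
(with `b` a non-degenerate symmetric bilinear form) that splits as a sum of two
square-zero `b`-selfadjoint endomorphisms, then `u` is similar to `-u`. -/
theorem similar_neg_of_selfadjoint_square_zero_splitting
    {F V : Type*} [Field F] [AddCommGroup V] [Module F V] [FiniteDimensional F V]
    (hchar : (2 : F) ≠ 0)
    (b : LinearMap.BilinForm F V) (hb : b.Nondegenerate)
    (hbs : ∀ x y, b x y = b y x)
    (u a₁ a₂ : Module.End F V)
    (hu : ∀ x y, b (u x) y = b x (u y))
    (ha₁ : ∀ x y, b (a₁ x) y = b x (a₁ y))
    (ha₂ : ∀ x y, b (a₂ x) y = b x (a₂ y))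
    (h1 : a₁ ^ 2 = 0) (h2 : a₂ ^ 2 = 0) (hsum : u = a₁ + a₂) :
    ∃ φ : V ≃ₗ[F] V, ∀ x, φ (u x) = -u (φ x) := by
  classical
  set v : Module.End F V := a₁ - a₂ with hv
  have h1' : a₁ * a₁ = 0 := by rw [← sq]; exact h1
  have h2' : a₂ * a₂ = 0 := by rw [← sq]; exact h2
  have hanti : v * u = -(u * v) := by
    rw [hv, hsum]
    noncomm_ring
    rw [h1', h2']
    simp
  have hanti' : u * v = -(v * u) := by rw [hanti, neg_neg]
  have hsq : v * v = -(u * u) := by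
    rw [hv, hsum]
    noncomm_ring
    rw [h1', h2']
    simp
  -- powers
  have hswap : ∀ m : ℕ, u ^ m * v = v * (-u) ^ m := by
    intro m
    induction m with
    | zero => simp
    | succ m ih =>
      calc u ^ (m + 1) * v = u * (u ^ m * v) := by rw [pow_succ', mul_assoc]
        _ = u * (v * (-u) ^ m) := by rw [ih]
        _ = (u * v) * (-u) ^ m := by rw [mul_assoc]
        _ = (v * -u) * (-u) ^ m := by rw [hanti', ← mul_neg]
        _ = v * (-u) ^ (m + 1) := by rw [mul_assoc, ← pow_succ']
  have hswap' : ∀ m : ℕ, v * u ^ m = (-u) ^ m * v := by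
    intro m
    induction m with
    | zero => simp
    | succ m ih =>
      calc v * u ^ (m + 1) = (v * u ^ m) * u := by rw [pow_succ, ← mul_assoc]
        _ = ((-u) ^ m * v) * u := by rw [ih]
        _ = (-u) ^ m * (v * u) := by rw [mul_assoc]
        _ = (-u) ^ m * (-u * v) := by rw [hanti, ← neg_mul]
        _ = (-u) ^ (m + 1) * v := by rw [← mul_assoc, ← pow_succ]
  -- Fitting decomposition
  set K : Submodule F V := ⨆ m : ℕ, LinearMap.ker (u ^ m) with hKdef
  set R : Submodule F V := ⨅ m : ℕ, LinearMap.range (u ^ m) with hRdef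
  have hKR : IsCompl K R := LinearMap.isCompl_iSup_ker_pow_iInf_range_pow u
  obtain ⟨N₁, hN₁⟩ := Filter.eventually_atTop.mp u.eventually_iSup_ker_pow_eq
  obtain ⟨N₂, hN₂⟩ := Filter.eventually_atTop.mp u.eventually_iInf_range_pow_eq
  set n : ℕ := max N₁ N₂ with hn
  have hK : LinearMap.ker (u ^ n) = K := (hN₁ n (le_max_left _ _)).symm
  have hK1 : LinearMap.ker (u ^ (n + 1)) = K := (hN₁ (n + 1) (le_trans (le_max_left _ _) (Nat.le_succ n))).symm
  have hR : LinearMap.range (u ^ n) = R := (hN₂ n (le_max_right _ _)).symm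
  -- invariance
  have hKu : ∀ x ∈ K, u x ∈ K := by
    intro x hx
    rw [← hK, LinearMap.mem_ker, ← Module.End.mul_apply, ← pow_succ]
    rw [← hK1] at hx
    exact hx
  have hRu : ∀ x ∈ R, u x ∈ R := by
    intro x hx
    rw [← hR] at hx ⊢
    obtain ⟨z, rfl⟩ := hx
    exact ⟨u z, by rw [← Module.End.mul_apply, ← pow_succ, pow_succ', Module.End.mul_apply]⟩
  have hKv : ∀ x ∈ K, v x ∈ K := by
    intro x hx
    rw [← hK, LinearMap.mem_ker] at hx ⊢
    have : (u ^ n * v) x = v (((-u) ^ n) x) := by rw [hswap]; rfl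
    rw [Module.End.mul_apply] at this
    rw [this]
    rcases Nat.even_or_odd n with he | ho
    · rw [he.neg_pow, hx, map_zero]
    · rw [ho.neg_pow, LinearMap.neg_apply, hx, neg_zero, map_zero]
  have hRv : ∀ x ∈ R, v x ∈ R := by
    intro x hx
    rw [← hR] at hx ⊢
    obtain ⟨z, rfl⟩ := hx
    have : v ((u ^ n) z) = ((-u) ^ n) (v z) := by
      rw [← Module.End.mul_apply, hswap', Module.End.mul_apply]
    rw [this]
    rcases Nat.even_or_odd n with he | ho
    · rw [he.neg_pow]; exact ⟨v z, rfl⟩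
    · rw [ho.neg_pow]; exact ⟨-(v z), by simp⟩
  -- nilpotent part
  have huK : IsNilpotent (u.restrict hKu) := by
    refine ⟨n, ?_⟩
    ext ⟨x, hx⟩
    rw [Module.End.pow_restrict, LinearMap.restrict_apply]
    rw [← hK, LinearMap.mem_ker] at hx
    simp [hx]
  obtain ⟨φK, hφK⟩ := nilpotent_similar_neg (u.restrict hKu) huK
  -- invertible part
  have hvR_inj : Function.Injective (v.restrict hRv) := by
    intro ⟨x, hx⟩ ⟨y, hy⟩ hxy
    rw [Subtype.ext_iff] at hxy ⊢
    simp only [LinearMap.restrict_apply] at hxy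
    suffices h : ∀ z ∈ R, v z = 0 → z = 0 by
      have := h (x - y) (sub_mem hx hy) (by rw [map_sub, hxy, sub_self])
      exact sub_eq_zero.mp this
    intro z hz hvz
    have huz : (u ^ 2) z = 0 := by
      have h : (u * u) z = -((v * v) z) := by rw [hsq]; simp
      rw [pow_two, h, Module.End.mul_apply, hvz, map_zero, neg_zero]
    have hzK : z ∈ K := by
      rw [hKdef]
      exact Submodule.mem_iSup_of_mem 2 huz
    have := hKR.disjoint
    rw [Submodule.disjoint_def] at this
    exact this z hzK hz
  have hvR_bij : Function.Bijective (v.restrict hRv) :=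
    ⟨hvR_inj, (LinearMap.injective_iff_surjective).mp hvR_inj⟩
  set φR : R ≃ₗ[F] R := LinearEquiv.ofBijective (v.restrict hRv) hvR_bij with hφRdef
  have hφR : ∀ y : R, φR (u.restrict hRu y) = -(u.restrict hRu (φR y)) := by
    intro y
    apply Subtype.ext
    have hL : ((φR (u.restrict hRu y) : R) : V) = v (u (y : V)) := by
      rw [hφRdef]
      simp [LinearMap.restrict_apply]
    have hRR : (((-(u.restrict hRu (φR y)) : R)) : V) = -(u (v (y : V))) := by
      rw [hφRdef]
      simp [LinearMap.restrict_apply]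
    rw [hL, hRR]
    have h := LinearMap.ext_iff.mp hanti (y : V)
    simpa using h
  -- combine
  set e : (K × R) ≃ₗ[F] V := Submodule.prodEquivOfIsCompl K R hKR with he
  refine ⟨e.symm.trans ((φK.prodCongr φR).trans e), fun x => ?_⟩
  obtain ⟨⟨k, r⟩, rfl⟩ := e.surjective x
  have hekr : e (k, r) = (k : V) + (r : V) := rfl
  have hu_e : u (e (k, r)) = e (⟨u k, hKu k k.2⟩, ⟨u r, hRu r r.2⟩) := by
    rw [hekr]
    show u ((k : V) + (r : V)) = _
    rw [map_add]
    rfl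
  simp only [LinearEquiv.trans_apply, hu_e, LinearEquiv.symm_apply_apply]
  have hprod : ∀ (a : K) (c : R), (φK.prodCongr φR) (a, c) = (φK a, φR c) := fun a c => rfl
  have hcoe : ∀ (a : K) (c : R), e (a, c) = (a : V) + (c : V) := fun a c => rfl
  rw [hprod, hprod, hcoe, hcoe]
  have hk1 : (⟨u (k : V), hKu _ k.2⟩ : K) = u.restrict hKu k := rfl
  have hr1 : (⟨u (r : V), hRu _ r.2⟩ : R) = u.restrict hRu r := rfl
  rw [hk1, hr1, hφK k, hφR r]
  simp only [Submodule.coe_neg, LinearMap.restrict_apply, map_add, neg_add]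
end

section
/- Let V be a finite-dimensional vector space over F and u an endomorphism of V that is the sum of two square-zero endomorphisms. Then for any η ∈ {1,−1}, the endomorphism h_η(u) of V × V* defined by h_η(u)(x,φ) = (u(x), η·(φ∘u)) is also a sum of two square-zero endomorphisms a₁', a₂' of V × V*, each of which satisfies H^ε(a_i'(X), Y) = η·H^ε(X, a_i'(Y)) for all X, Y, where H^ε((x,φ),(y,ψ)) = φ(y)+ε·ψ(x). -/
/-! Since `b ↦ h_η(b)` is additive and `h_η(b)²` acts as `b²` on `V` and as `η² • (b²)*` on `V*`,
a square-zero splitting `u = b₁ + b₂` lifts to `h_η(u) = h_η(b₁) + h_η(b₂)`. Each `h_η(b)`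
is `η`-self-adjoint for `H^ε` because the cross term picks up `η²`, which is `1`. -/

namespace Module.End

variable {R V : Type*} [CommRing R] [AddCommGroup V] [Module R V]

def hyperbolicExtension (η : R) (b : Module.End R V) : Module.End R (V × Module.Dual R V) :=
  b.prodMap (η • b.dualMap)

@[simp]
theorem hyperbolicExtension_apply (η : R) (b : Module.End R V) (p : V × Module.Dual R V) :
    hyperbolicExtension η b p = (b p.1, η • (p.2 ∘ₗ b)) :=
  rfl

theorem hyperbolicExtension_add (η : R) (b₁ b₂ : Module.End R V) :
    hyperbolicExtension η (b₁ + b₂) = hyperbolicExtension η b₁ + hyperbolicExtension η b₂ := by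
  ext p <;> simp [LinearMap.comp_add, smul_add]

theorem hyperbolicExtension_sq_eq_zero (η : R) {b : Module.End R V} (hb : b ^ 2 = 0) :
    hyperbolicExtension η b ^ 2 = 0 := by
  have hbb : ∀ x, b (b x) = 0 := fun x => by
    simpa [sq] using LinearMap.congr_fun hb x
  ext p <;> simp [sq, hbb]

theorem hyperbolicExtension_adjoint (ε : R) {η : R} (hη : η * η = 1) (b : Module.End R V)
    (H : LinearMap.BilinForm R (V × Module.Dual R V))
    (hH : ∀ p q : V × Module.Dual R V, H p q = p.2 q.1 + ε * q.2 p.1)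
    (X Y : V × Module.Dual R V) :
    H (hyperbolicExtension η b X) Y = η * H X (hyperbolicExtension η b Y) := by
  simp only [hH, hyperbolicExtension_apply, LinearMap.smul_apply, LinearMap.comp_apply,
    smul_eq_mul]
  linear_combination (-(ε * Y.2 (b X.1))) * hη

end Module.End

open Module.End in
theorem hyperbolic_extension_square_zero_splitting_general
    {F V : Type*} [Field F] [AddCommGroup V] [Module F V]
    (u : Module.End F V)
    (hsplit : ∃ b₁ b₂ : Module.End F V, u = b₁ + b₂ ∧ b₁ ^ 2 = 0 ∧ b₂ ^ 2 = 0)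
    (η : F) (hη : η = 1 ∨ η = -1) (ε : F)
    (h : Module.End F (V × Module.Dual F V))
    (hh : ∀ p : V × Module.Dual F V, h p = (u p.1, η • (p.2 ∘ₗ u)))
    (H : LinearMap.BilinForm F (V × Module.Dual F V))
    (hH : ∀ p q : V × Module.Dual F V, H p q = p.2 q.1 + ε * q.2 p.1) :
    ∃ a₁' a₂' : Module.End F (V × Module.Dual F V),
      h = a₁' + a₂' ∧ a₁' ^ 2 = 0 ∧ a₂' ^ 2 = 0 ∧
      (∀ X Y, H (a₁' X) Y = η * H X (a₁' Y)) ∧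
      (∀ X Y, H (a₂' X) Y = η * H X (a₂' Y)) := by
  obtain ⟨b₁, b₂, rfl, hb₁, hb₂⟩ := hsplit
  have hηη : η * η = 1 := by rcases hη with rfl | rfl <;> norm_num
  have h_eq : h = hyperbolicExtension η (b₁ + b₂) := LinearMap.ext hh
  exact ⟨hyperbolicExtension η b₁, hyperbolicExtension η b₂,
    h_eq.trans (hyperbolicExtension_add η b₁ b₂),
    hyperbolicExtension_sq_eq_zero η hb₁, hyperbolicExtension_sq_eq_zero η hb₂,
    hyperbolicExtension_adjoint ε hηη b₁ H hH, hyperbolicExtension_adjoint ε hηη b₂ H hH⟩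

/-- If `u` is a sum of two square-zero endomorphisms of `V`, then `h_η(u)` is a sum of
two square-zero endomorphisms of `V × V*` each of which satisfies
`H^ε(aᵢ'(X), Y) = η · H^ε(X, aᵢ'(Y))`. -/
theorem hyperbolic_extension_square_zero_splitting
    {F V : Type*} [Field F] [AddCommGroup V] [Module F V] [FiniteDimensional F V]
    (u : Module.End F V)
    (hsplit : ∃ b₁ b₂ : Module.End F V, u = b₁ + b₂ ∧ b₁ ^ 2 = 0 ∧ b₂ ^ 2 = 0)
    (η : F) (hη : η = 1 ∨ η = -1) (ε : F) (hε : ε = 1 ∨ ε = -1)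
    (h : Module.End F (V × Module.Dual F V))
    (hh : ∀ p : V × Module.Dual F V, h p = (u p.1, η • (p.2 ∘ₗ u)))
    (H : LinearMap.BilinForm F (V × Module.Dual F V))
    (hH : ∀ p q : V × Module.Dual F V, H p q = p.2 q.1 + ε * q.2 p.1) :
    ∃ a₁' a₂' : Module.End F (V × Module.Dual F V),
      h = a₁' + a₂' ∧ a₁' ^ 2 = 0 ∧ a₂' ^ 2 = 0 ∧
      (∀ X Y, H (a₁' X) Y = η * H X (a₁' Y)) ∧
      (∀ X Y, H (a₂' X) Y = η * H X (a₂' Y)) :=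
  hyperbolic_extension_square_zero_splitting_general u hsplit η hη ε h hh H hH
end

section
/- Let V be a finite-dimensional vector space over a field F of characteristic ≠ 2, and let b, c be bilinear forms on V with b non-degenerate, both symmetric or both alternating. Then the square of the boxed sum b ⊞ c on V × V* equals h₁(L_b⁻¹ ∘ L_c), i.e. (b ⊞ c)²(x, φ) = ((L_b⁻¹L_c)(x), φ ∘ (L_b⁻¹L_c)). -/
/-- If `b, c` are bilinear forms on `V` with `b` non-degenerate, both symmetric or
both alternating, and `char F ≠ 2`, then the square of the boxed sum `b ⊞ c` equals
`h₁(L_b⁻¹ ∘ L_c) : (x,φ) ↦ ((L_b⁻¹L_c)(x), φ ∘ (L_b⁻¹L_c))`. -/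
theorem boxed_sum_sq
    {F V : Type*} [Field F] [AddCommGroup V] [Module F V] [FiniteDimensional F V]
    (hchar : (2 : F) ≠ 0)
    (b c : LinearMap.BilinForm F V) (hb : b.Nondegenerate)
    (hpar : ((∀ x y, b x y = b y x) ∧ (∀ x y, c x y = c y x)) ∨
            ((∀ x, b x x = 0) ∧ (∀ x, c x x = 0)))
    (u : Module.End F (V × Module.Dual F V))
    (hu : ∀ p : V × Module.Dual F V, b.flip (u p).1 = p.2 ∧ (u p).2 = c.flip p.1)
    (w : Module.End F V) (hw : ∀ x, b.flip (w x) = c.flip x) :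
    ∀ p : V × Module.Dual F V, (u ^ 2) p = (w p.1, p.2 ∘ₗ w) := by
  -- key: b (w y) z = c y z
  have key : ∀ y z, b (w y) z = c y z := by
    intro y z
    have h1 : b z (w y) = c z y := by
      have := DFunLike.congr_fun (hw y) z
      simpa using this
    rcases hpar with ⟨hbs, hcs⟩ | ⟨hba, hca⟩
    · rw [hbs (w y) z, h1]; exact hcs z y
    · have hb' : -b z (w y) = b (w y) z := LinearMap.IsAlt.neg hba z (w y)
      have hc' : -c z y = c y z := LinearMap.IsAlt.neg hca z y
      rw [← hb', h1, hc']
  have hinj : ∀ a a' : V, b.flip a = b.flip a' → a = a' := by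
    intro a a' h
    have h0 : ∀ n, b n (a - a') = 0 := by
      intro n
      have h' : b n a = b n a' := DFunLike.congr_fun h n
      rw [map_sub, h', sub_self]
    have h1 : ∀ n, b (a - a') n = 0 := by
      intro n
      rcases hpar with ⟨hbs, _⟩ | ⟨hba, _⟩
      · rw [hbs]; exact h0 n
      · rw [← LinearMap.IsAlt.neg hba n (a - a'), h0 n, neg_zero]
    have := hb.1 (a - a') h1
    exact sub_eq_zero.mp this
  intro p
  obtain ⟨x, φ⟩ := p
  have h2 : (u ^ 2) (x, φ) = u (u (x, φ)) := by
    rw [pow_two]; rfl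
  set q := u (x, φ) with hq
  obtain ⟨hq1, hq2⟩ := hu (x, φ)
  obtain ⟨hr1, hr2⟩ := hu q
  rw [h2]
  have hfst : (u q).1 = w x := by
    apply hinj
    rw [hr1, hq2, hw]
  have hsnd : (u q).2 = φ ∘ₗ w := by
    rw [hr2]
    ext y
    simp only [LinearMap.flip_apply, LinearMap.coe_comp, Function.comp_apply]
    have hφ : φ = b.flip q.1 := hq1.symm
    rw [hφ]
    exact (key y q.1).symm
  exact Prod.ext hfst hsnd
end

section
/- Let V be a finite-dimensional vector space over a field F, and b, c bilinear forms on V with b non-degenerate. If A is the matrix of L_b⁻¹∘L_c in a basis (e₁,...,e_n), then in a suitable basis of V × V* the matrix of b ⊞ c is the 2n × 2n block matrix [[0, A],[I_n, 0]]. Consequently, if p₁,…,p_r are the invariant factors of L_b⁻¹∘L_c then the invariant factors of b ⊞ c are p₁(t²),…,p_r(t²). -/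
open Polynomial

/-- Even/odd decomposition of a polynomial. -/
lemma even_odd_decomp {F : Type*} [Field F] (s : F[X]) :
    ∃ s₀ s₁ : F[X], s = expand F 2 s₀ + X * expand F 2 s₁ := by
  induction s using Polynomial.induction_on with
  | C a => exact ⟨C a, 0, by simp⟩
  | add p q hp hq =>
    obtain ⟨p₀, p₁, hp⟩ := hp; obtain ⟨q₀, q₁, hq⟩ := hq
    exact ⟨p₀ + q₀, p₁ + q₁, by rw [hp, hq, map_add, map_add]; ring⟩
  | monomial n a h =>
    obtain ⟨r₀, r₁, h⟩ := h
    refine ⟨X * r₁, r₀, ?_⟩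
    have h1 : C a * X ^ (n + 1) = X * (C a * X ^ n) := by ring
    rw [h1, h, map_mul, expand_X]
    ring

/-- Uniqueness in the even/odd decomposition. -/
lemma even_odd_zero {F : Type*} [Field F] {q₀ q₁ : F[X]}
    (h : expand F 2 q₀ + X * expand F 2 q₁ = 0) : q₀ = 0 ∧ q₁ = 0 := by
  have h0 : q₀ = 0 := by
    ext k
    have hh := congrArg (fun r => Polynomial.coeff r (2 * k)) h
    simp only [coeff_add, coeff_zero] at hh
    rw [coeff_expand_mul' (by norm_num)] at hh
    have hz : (X * expand F 2 q₁).coeff (2 * k) = 0 := by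
      rcases k with _ | k'
      · simp [Polynomial.mul_coeff_zero]
      · have h2k : 2 * (k' + 1) = (2 * k' + 1) + 1 := by omega
        rw [h2k, coeff_X_mul, coeff_expand (by norm_num), if_neg (by omega)]
    rw [hz, add_zero] at hh
    simpa using hh
  refine ⟨h0, ?_⟩
  rw [h0, map_zero, zero_add] at h
  have hq : expand F 2 q₁ = 0 := by
    rcases mul_eq_zero.mp h with h' | h'
    · exact absurd h' X_ne_zero
    · exact h'
  exact expand_injective (n := 2) two_pos (by simpa using hq)

/-- The natural `F`-algebra map `F[X]/(p) → F[X]/(p(X²))` induced by `X ↦ X²`. -/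
noncomputable def qmap {F : Type*} [Field F] (p : F[X]) :
    (F[X] ⧸ Ideal.span {p}) →ₐ[F] F[X] ⧸ Ideal.span {expand F 2 p} :=
  Ideal.Quotient.liftₐ (Ideal.span {p})
    ((Ideal.Quotient.mkₐ F (Ideal.span {expand F 2 p})).comp (expand F 2)) (by
      intro a ha
      rw [Ideal.mem_span_singleton] at ha
      obtain ⟨m, rfl⟩ := ha
      simp only [AlgHom.comp_apply, Ideal.Quotient.mkₐ_eq_mk]
      rw [Ideal.Quotient.eq_zero_iff_mem, Ideal.mem_span_singleton]
      exact ⟨expand F 2 m, by rw [map_mul]⟩)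

lemma qmap_mk {F : Type*} [Field F] (p q : F[X]) :
    qmap p (Ideal.Quotient.mk _ q) = Ideal.Quotient.mk _ (expand F 2 q) := rfl

lemma smul_mk_quot {F : Type*} [Field F] (I : Ideal F[X]) (f q : F[X]) :
    f • (Ideal.Quotient.mk I q) = Ideal.Quotient.mk I (f * q) := rfl

set_option maxHeartbeats 1000000 in
/-- If `A` is the matrix of `L_b⁻¹∘L_c` in a basis of `V`, then in a suitable basis of
`V × V*` the matrix of the boxed sum `b ⊞ c` is the block matrix `[[0, A],[Iₙ, 0]]`;
consequently, if the invariant factors of `L_b⁻¹∘L_c` are `p₁,…,p_r` then those of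
`b ⊞ c` are `p₁(t²),…,p_r(t²)` (invariant-factor decompositions are expressed via
`F[t]`-module isomorphisms of `Module.AEval'`). -/
theorem boxed_sum_matrix_and_invariant_factors
    {F V : Type*} [Field F] [AddCommGroup V] [Module F V] [FiniteDimensional F V]
    (b c : LinearMap.BilinForm F V) (hb : b.Nondegenerate)
    (u : Module.End F (V × Module.Dual F V))
    (hu : ∀ p : V × Module.Dual F V, b.flip (u p).1 = p.2 ∧ (u p).2 = c.flip p.1)
    (w : Module.End F V) (hw : ∀ x, b.flip (w x) = c.flip x)
    (n : ℕ) (e : Module.Basis (Fin n) F V) (A : Matrix (Fin n) (Fin n) F)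
    (hA : A = LinearMap.toMatrix e e w) :
    (∃ B : Module.Basis (Fin n ⊕ Fin n) F (V × Module.Dual F V),
        LinearMap.toMatrix B B u = Matrix.fromBlocks 0 A 1 0) ∧
    (∀ (r : ℕ) (p : Fin r → Polynomial F), (∀ i, (p i).Monic) →
      (∀ (i : Fin r) (h : (i : ℕ) + 1 < r), p ⟨(i : ℕ) + 1, h⟩ ∣ p i) →
      Nonempty ((Module.AEval' w) ≃ₗ[Polynomial F]
        ((i : Fin r) → Polynomial F ⧸ Ideal.span {p i})) →
      Nonempty ((Module.AEval' u) ≃ₗ[Polynomial F]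
        ((i : Fin r) → Polynomial F ⧸ Ideal.span {(p i).comp (Polynomial.X ^ 2)}))) := by
  have hbinj : Function.Injective b.flip := LinearMap.ker_eq_bot.mp hb.flip.ker_eq_bot
  set D : V ≃ₗ[F] Module.Dual F V := b.flip.toDual hb.flip with hDdef
  have hD : ∀ x, D x = b.flip x := fun _ => rfl
  constructor
  · set d : Module.Basis (Fin n) F (Module.Dual F V) := e.map D with hd
    set B : Module.Basis (Fin n ⊕ Fin n) F (V × Module.Dual F V) :=
      (d.prod e).map (LinearEquiv.prodComm F (Module.Dual F V) V) with hB
    refine ⟨B, ?_⟩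
    have hBinl : ∀ i, B (Sum.inl i) = ((0 : V), d i) := by
      intro i
      simp [hB, Module.Basis.map_apply, Module.Basis.prod_apply]
    have hBinr : ∀ j, B (Sum.inr j) = (e j, (0 : Module.Dual F V)) := by
      intro j
      simp [hB, Module.Basis.map_apply, Module.Basis.prod_apply]
    have hdb : ∀ i, d i = b.flip (e i) := by
      intro i; rw [hd, Module.Basis.map_apply]; exact hD (e i)
    have hwj : ∀ j, (∑ k, A k j • e k) = w (e j) := by
      intro j
      rw [hA]
      simp_rw [LinearMap.toMatrix_apply]
      exact e.sum_repr _
    have key : u = Matrix.toLin B B (Matrix.fromBlocks 0 A 1 0) := by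
      apply B.ext
      intro k
      rw [Matrix.toLin_self]
      cases k with
      | inl i =>
        have h1 : u (B (Sum.inl i)) = (e i, (0 : Module.Dual F V)) := by
          rw [hBinl]
          have h2 := (hu ((0 : V), d i)).1
          have h3 := (hu ((0 : V), d i)).2
          have hfst : (u ((0 : V), d i)).1 = e i := by
            apply hbinj; rw [h2, hdb]
          refine Prod.ext hfst ?_
          rw [h3]; simp
        rw [h1, Fintype.sum_sum_type]
        simp [Matrix.one_apply, ite_smul, hBinr]
      | inr j =>
        have h1 : u (B (Sum.inr j)) = ((0 : V), b.flip (w (e j))) := by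
          rw [hBinr]
          have h2 := (hu (e j, (0 : Module.Dual F V))).1
          have h3 := (hu (e j, (0 : Module.Dual F V))).2
          have hfst : (u (e j, (0 : Module.Dual F V))).1 = 0 := by
            apply hbinj; rw [h2]; simp
          refine Prod.ext hfst ?_
          rw [h3, ← hw]
        rw [h1, Fintype.sum_sum_type]
        simp_rw [hBinl, hBinr]
        refine Prod.ext ?_ ?_
        · simp [Prod.fst_sum]
        · simp only [Prod.snd_sum, Prod.smul_mk, smul_zero, Matrix.fromBlocks_apply₁₂,
            Matrix.fromBlocks_apply₂₂, Matrix.zero_apply, zero_smul, Finset.sum_const_zero,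
            add_zero, Prod.snd_add]
          rw [← hwj j, map_sum]
          simp [hdb]
    rw [key, LinearMap.toMatrix_toLin]
  · intro r p _ _ hg
    obtain ⟨g⟩ := hg
    let N := (i : Fin r) → F[X] ⧸ Ideal.span {expand F 2 (p i)}
    let gV : V ≃ₗ[F] ((i : Fin r) → F[X] ⧸ Ideal.span {p i}) :=
      (Module.AEval'.of w).trans (g.restrictScalars F)
    have hgw : ∀ x : V, gV (w x) = (X : F[X]) • gV x := by
      intro x
      show g (Module.AEval'.of w (w x)) = (X : F[X]) • g (Module.AEval'.of w x)
      rw [← Module.AEval'.X_smul_of, map_smul]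
    let T : ((i : Fin r) → F[X] ⧸ Ideal.span {p i}) →ₗ[F] N :=
      LinearMap.pi (fun i => (qmap (p i)).toLinearMap ∘ₗ LinearMap.proj i)
    let Xs : N →ₗ[F] N :=
      { toFun := fun v => (X : F[X]) • v
        map_add' := fun v₁ v₂ => smul_add _ v₁ v₂
        map_smul' := fun a v => (smul_comm a (X : F[X]) v).symm }
    let Φ : (V × Module.Dual F V) →ₗ[F] N :=
      T ∘ₗ gV.toLinearMap ∘ₗ D.symm.toLinearMap ∘ₗ LinearMap.snd F V (Module.Dual F V) +
      Xs ∘ₗ T ∘ₗ gV.toLinearMap ∘ₗ LinearMap.fst F V (Module.Dual F V)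
    have hΦ : ∀ z i, Φ z i = qmap (p i) (gV (D.symm z.2) i) +
        (X : F[X]) • qmap (p i) (gV z.1 i) := by
      intro z i
      simp only [Φ, T, Xs, LinearMap.add_apply, LinearMap.coe_comp, Function.comp_apply,
        LinearMap.coe_mk, AddHom.coe_mk, LinearEquiv.coe_coe, LinearMap.fst_apply,
        LinearMap.snd_apply, Pi.add_apply, Pi.smul_apply, LinearMap.pi_apply,
        LinearMap.proj_apply, AlgHom.toLinearMap_apply]
      rfl
    have hsplit : ∀ (i : Fin r) (a bb : F[X] ⧸ Ideal.span {p i}),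
        qmap (p i) a + (X : F[X]) • qmap (p i) bb = 0 → a = 0 ∧ bb = 0 := by
      intro i a bb h
      obtain ⟨α, rfl⟩ := Ideal.Quotient.mk_surjective a
      obtain ⟨β, rfl⟩ := Ideal.Quotient.mk_surjective bb
      rw [qmap_mk, qmap_mk, smul_mk_quot, ← map_add, Ideal.Quotient.eq_zero_iff_mem,
        Ideal.mem_span_singleton] at h
      obtain ⟨m, hm⟩ := h
      obtain ⟨m₀, m₁, hm01⟩ := even_odd_decomp m
      have hz : expand F 2 (α - p i * m₀) + X * expand F 2 (β - p i * m₁) = 0 := by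
        have h2 : expand F 2 α + X * expand F 2 β =
            expand F 2 (p i) * (expand F 2 m₀ + X * expand F 2 m₁) := by
          rw [hm, hm01]
        simp only [map_sub, map_mul]
        linear_combination h2
      obtain ⟨hα, hβ⟩ := even_odd_zero hz
      constructor
      · rw [Ideal.Quotient.eq_zero_iff_mem, Ideal.mem_span_singleton]
        exact ⟨m₀, by linear_combination hα⟩
      · rw [Ideal.Quotient.eq_zero_iff_mem, Ideal.mem_span_singleton]
        exact ⟨m₁, by linear_combination hβ⟩
    have hinj : Function.Injective Φ := by
      rw [← LinearMap.ker_eq_bot]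
      rw [eq_bot_iff]
      intro z hz
      have hz0 : Φ z = 0 := LinearMap.mem_ker.mp hz
      have hcomp : ∀ i, qmap (p i) (gV (D.symm z.2) i) +
          (X : F[X]) • qmap (p i) (gV z.1 i) = 0 := by
        intro i
        rw [← hΦ z i, hz0]
        rfl
      have ha : gV (D.symm z.2) = 0 := funext fun i => (hsplit i _ _ (hcomp i)).1
      have hb2 : gV z.1 = 0 := funext fun i => (hsplit i _ _ (hcomp i)).2
      have h2 : z.2 = 0 := by
        have := gV.map_eq_zero_iff.mp ha
        have := D.symm.map_eq_zero_iff.mp this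
        exact this
      have h1 : z.1 = 0 := gV.map_eq_zero_iff.mp hb2
      rw [Submodule.mem_bot]
      exact Prod.ext h1 h2
    have hsurj : Function.Surjective Φ := by
      intro y
      choose s hs using fun i => Ideal.Quotient.mk_surjective (y i)
      choose s₀ s₁ hdec using fun i => even_odd_decomp (s i)
      refine ⟨(gV.symm fun i => Ideal.Quotient.mk _ (s₁ i),
        D (gV.symm fun i => Ideal.Quotient.mk _ (s₀ i))), ?_⟩
      funext i
      rw [hΦ, D.symm_apply_apply, gV.apply_symm_apply, gV.apply_symm_apply]
      show qmap (p i) (Ideal.Quotient.mk _ (s₀ i)) +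
        (X : F[X]) • qmap (p i) (Ideal.Quotient.mk _ (s₁ i)) = y i
      rw [qmap_mk, qmap_mk, smul_mk_quot, ← map_add, ← hdec i, hs i]
    have hkey : ∀ m : V × Module.Dual F V, Φ (u m) = (X : F[X]) • Φ m := by
      intro m
      funext i
      have hm2 : D.symm ((u m).2) = w m.1 := by
        have : (u m).2 = D (w m.1) := by rw [(hu m).2, ← hw m.1, ← hD]
        rw [this, D.symm_apply_apply]
      have hm1 : (u m).1 = D.symm m.2 := by
        apply hbinj
        rw [(hu m).1, ← hD, D.apply_symm_apply]
      have hq : ∀ a : F[X] ⧸ Ideal.span {p i},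
          qmap (p i) ((X : F[X]) • a) = (X : F[X]) • ((X : F[X]) • qmap (p i) a) := by
        intro a
        obtain ⟨α, rfl⟩ := Ideal.Quotient.mk_surjective a
        rw [smul_mk_quot, qmap_mk, qmap_mk, smul_mk_quot, smul_mk_quot, map_mul, expand_X]
        congr 1
        ring
      rw [hΦ, hm2, hm1, hgw, Pi.smul_apply, hq, Pi.smul_apply, hΦ, smul_add, add_comm]
    have hE : Module.AEval' u ≃ₗ[F[X]] N :=
      LinearEquiv.ofAEval u (LinearEquiv.ofBijective Φ ⟨hinj, hsurj⟩) hkey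
    exact ⟨hE⟩
end

section
/- Let char F ≠ 2 and let V be a finite-dimensional F-vector space with (b, u) a pair where b is a non-degenerate symmetric or alternating bilinear form, u is b-selfadjoint or b-skew-selfadjoint, and u is an automorphism. If u = a₁ + a₂ with a₁² = a₂² = 0 and a₁, a₂ of the same parity as u with respect to b, then setting V₁ = Im a₁ and V₂ = Im a₂: V = V₁ ⊕ V₂, both V₁ and V₂ are totally b-isotropic with V₁ = V₁^⊥ and V₂ = V₂^⊥, a₁ maps V₂ bijectively onto V₁, and a₂ maps V₁ bijectively onto V₂. -/
lemma square_zero_aux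
    {F V : Type*} [Field F] [AddCommGroup V] [Module F V] [FiniteDimensional F V]
    (b : LinearMap.BilinForm F V) (hb : b.Nondegenerate) (η : F)
    (c d : Module.End F V)
    (hinj : ∀ x : V, c x = 0 → d x = 0 → x = 0)
    (hc : ∀ x y, b (c x) y = η * b x (c y))
    (h1 : c ^ 2 = 0) (h2 : d ^ 2 = 0) :
    LinearMap.range c = LinearMap.ker c ∧
    IsCompl (LinearMap.range c) (LinearMap.range d) ∧
    (∀ x ∈ LinearMap.range c, ∀ y ∈ LinearMap.range c, b x y = 0) ∧
    (∀ x : V, x ∈ LinearMap.range c ↔ ∀ y ∈ LinearMap.range c, b x y = 0) ∧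
    Set.BijOn c (LinearMap.range d : Set V) (LinearMap.range c : Set V) := by
  have key : ∀ (a : Module.End F V), a ^ 2 = 0 → ∀ x, a (a x) = 0 := by
    intro a ha x
    have := LinearMap.ext_iff.mp ha x
    simpa [pow_two, Module.End.mul_apply] using this
  have hrc : LinearMap.range c ≤ LinearMap.ker c := by
    rintro _ ⟨x, rfl⟩; exact key c h1 x
  have hrd : LinearMap.range d ≤ LinearMap.ker d := by
    rintro _ ⟨x, rfl⟩; exact key d h2 x
  have hker : LinearMap.ker c ⊓ LinearMap.ker d = ⊥ := by
    rw [Submodule.eq_bot_iff]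
    rintro x ⟨hx1, hx2⟩
    exact hinj x hx1 hx2
  set n := Module.finrank F V with hn
  have e1 := LinearMap.finrank_range_add_finrank_ker c
  have e2 := LinearMap.finrank_range_add_finrank_ker d
  have hsupinf := Submodule.finrank_sup_add_finrank_inf_eq (LinearMap.ker c) (LinearMap.ker d)
  rw [hker] at hsupinf
  simp at hsupinf
  have hle : Module.finrank F (LinearMap.ker c) + Module.finrank F (LinearMap.ker d) ≤ n := by
    rw [← hsupinf]; exact Submodule.finrank_le _
  have hm1 : Module.finrank F (LinearMap.range c) ≤ Module.finrank F (LinearMap.ker c) :=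
    Submodule.finrank_mono hrc
  have hm2 : Module.finrank F (LinearMap.range d) ≤ Module.finrank F (LinearMap.ker d) :=
    Submodule.finrank_mono hrd
  have hrk1 : Module.finrank F (LinearMap.range c) = Module.finrank F (LinearMap.ker c) := by omega
  have hrk2 : Module.finrank F (LinearMap.range d) = Module.finrank F (LinearMap.ker d) := by omega
  have hceq : LinearMap.range c = LinearMap.ker c :=
    Submodule.eq_of_le_of_finrank_le hrc (le_of_eq hrk1.symm)
  have hdeq : LinearMap.range d = LinearMap.ker d :=
    Submodule.eq_of_le_of_finrank_le hrd (le_of_eq hrk2.symm)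
  have hdisj : LinearMap.range c ⊓ LinearMap.range d = ⊥ := by
    rw [hceq, hdeq, hker]
  have hcompl : IsCompl (LinearMap.range c) (LinearMap.range d) := by
    constructor
    · exact disjoint_iff.mpr hdisj
    · rw [codisjoint_iff]
      apply Submodule.eq_top_of_finrank_eq
      have := Submodule.finrank_sup_add_finrank_inf_eq (LinearMap.range c) (LinearMap.range d)
      rw [hdisj] at this
      simp at this
      omega
  have hiso : ∀ x ∈ LinearMap.range c, ∀ y ∈ LinearMap.range c, b x y = 0 := by
    rintro _ ⟨x, rfl⟩ _ ⟨y, rfl⟩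
    rw [hc, key c h1, map_zero, mul_zero]
  refine ⟨hceq, hcompl, hiso, ?_, ?_, ?_, ?_⟩
  · intro x
    constructor
    · exact fun hx => hiso x hx
    · intro hx
      have hcz : c x = 0 := by
        apply hb.1
        intro z
        rw [hc]
        rw [hx (c z) ⟨z, rfl⟩, mul_zero]
      rw [hceq]
      exact hcz
  · -- MapsTo
    rintro x hx
    exact ⟨x, rfl⟩
  · -- InjOn
    rintro x hx y hy hxy
    have hmem : x - y ∈ LinearMap.range c ⊓ LinearMap.range d := by
      constructor
      · rw [hceq]
        have : c (x - y) = 0 := by rw [map_sub, hxy, sub_self]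
        exact LinearMap.mem_ker.mpr this
      · exact Submodule.sub_mem _ hx hy
    rw [hdisj] at hmem
    exact sub_eq_zero.mp (Submodule.mem_bot F |>.mp hmem)
  · -- SurjOn
    rintro _ ⟨x, rfl⟩
    have hx : x ∈ LinearMap.range c ⊔ LinearMap.range d := by
      rw [codisjoint_iff.mp hcompl.codisjoint]; trivial
    obtain ⟨p, hp, q, hq, rfl⟩ := Submodule.mem_sup.mp hx
    refine ⟨q, hq, ?_⟩
    have hpz : c p = 0 := by rw [hceq] at hp; exact hp
    simp [map_add, hpz]

/-- If `(b,u)` is a pair (b non-degenerate, symmetric or alternating; `u` of parity `η`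
with respect to `b`) where `u` is an automorphism splitting as `a₁ + a₂` with
`a₁² = a₂² = 0` and `a₁, a₂` of the same parity `η`, then with `V₁ = Im a₁` and
`V₂ = Im a₂`: `V = V₁ ⊕ V₂`, both are totally isotropic and self-orthogonal, `a₁` maps
`V₂` bijectively onto `V₁`, and `a₂` maps `V₁` bijectively onto `V₂`. -/
theorem square_zero_splitting_of_automorphism_structure
    {F V : Type*} [Field F] [AddCommGroup V] [Module F V] [FiniteDimensional F V]
    (hchar : (2 : F) ≠ 0)
    (b : LinearMap.BilinForm F V) (hb : b.Nondegenerate)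
    (hbp : (∀ x y, b x y = b y x) ∨ (∀ x, b x x = 0))
    (η : F) (hη : η = 1 ∨ η = -1)
    (u a₁ a₂ : Module.End F V) (hbij : Function.Bijective u)
    (hu : ∀ x y, b (u x) y = η * b x (u y))
    (ha₁ : ∀ x y, b (a₁ x) y = η * b x (a₁ y))
    (ha₂ : ∀ x y, b (a₂ x) y = η * b x (a₂ y))
    (h1 : a₁ ^ 2 = 0) (h2 : a₂ ^ 2 = 0) (hsum : u = a₁ + a₂) :
    IsCompl (LinearMap.range a₁) (LinearMap.range a₂) ∧
    (∀ x ∈ LinearMap.range a₁, ∀ y ∈ LinearMap.range a₁, b x y = 0) ∧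
    (∀ x ∈ LinearMap.range a₂, ∀ y ∈ LinearMap.range a₂, b x y = 0) ∧
    (∀ x : V, x ∈ LinearMap.range a₁ ↔ ∀ y ∈ LinearMap.range a₁, b x y = 0) ∧
    (∀ x : V, x ∈ LinearMap.range a₂ ↔ ∀ y ∈ LinearMap.range a₂, b x y = 0) ∧
    Set.BijOn a₁ (LinearMap.range a₂ : Set V) (LinearMap.range a₁ : Set V) ∧
    Set.BijOn a₂ (LinearMap.range a₁ : Set V) (LinearMap.range a₂ : Set V) := by
  have hinj : ∀ x : V, a₁ x = 0 → a₂ x = 0 → x = 0 := by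
    intro x hx1 hx2
    apply hbij.injective
    simp [hsum, LinearMap.add_apply, hx1, hx2]
  obtain ⟨_, hcompl1, hiso1, horth1, hbij1⟩ :=
    square_zero_aux b hb η a₁ a₂ hinj ha₁ h1 h2
  obtain ⟨_, hcompl2, hiso2, horth2, hbij2⟩ :=
    square_zero_aux b hb η a₂ a₁ (fun x h h' => hinj x h' h) ha₂ h2 h1
  exact ⟨hcompl1, hiso1, hiso2, horth1, horth2, hbij1, hbij2⟩
end

section
/- Let char F ≠ 2 and let (b,u) be a pair where b is a non-degenerate symmetric bilinear form on finite-dimensional V and u is a b-selfadjoint or b-skew-selfadjoint endomorphism. Let Co(u) = ∩_n Im(u^n) and Nil(u) = ∪_n Ker(u^n) be the Fitting components. Then Nil(u) = Co(u)^⊥ with respect to b, and V = Co(u) ⊕ Nil(u), and both subspaces are stable under u. -/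
/-- Fitting decomposition of a `b`-selfadjoint or `b`-skew-selfadjoint endomorphism
(`b` non-degenerate symmetric, `char F ≠ 2`): the nilspace is the `b`-orthogonal of
the core, `V = Co(u) ⊕ Nil(u)`, and both summands are `u`-stable. -/
theorem fitting_decomposition_orthogonal
    {F V : Type*} [Field F] [AddCommGroup V] [Module F V] [FiniteDimensional F V]
    (hchar : (2 : F) ≠ 0)
    (b : LinearMap.BilinForm F V) (hb : b.Nondegenerate)
    (hbs : ∀ x y, b x y = b y x)
    (u : Module.End F V)
    (hu : (∀ x y, b (u x) y = b x (u y)) ∨ (∀ x y, b (u x) y = -b x (u y))) :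
    (∀ x : V, x ∈ (⨆ n : ℕ, LinearMap.ker (u ^ n)) ↔
      ∀ y ∈ (⨅ n : ℕ, LinearMap.range (u ^ n)), b x y = 0) ∧
    IsCompl (⨅ n : ℕ, LinearMap.range (u ^ n)) (⨆ n : ℕ, LinearMap.ker (u ^ n)) ∧
    (∀ x ∈ (⨅ n : ℕ, LinearMap.range (u ^ n)), u x ∈ (⨅ n : ℕ, LinearMap.range (u ^ n))) ∧
    (∀ x ∈ (⨆ n : ℕ, LinearMap.ker (u ^ n)), u x ∈ (⨆ n : ℕ, LinearMap.ker (u ^ n))) := by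
  have hrefl : b.IsRefl := fun x y h => by rw [hbs]; exact h
  have hcompl : IsCompl (⨅ n : ℕ, LinearMap.range (u ^ n)) (⨆ n : ℕ, LinearMap.ker (u ^ n)) :=
    (u.isCompl_iSup_ker_pow_iInf_range_pow).symm
  -- obtain a stabilization index k
  obtain ⟨k, hk⟩ := Filter.eventually_atTop.mp <|
    u.eventually_iInf_range_pow_eq.and u.eventually_iSup_ker_pow_eq
  obtain ⟨hkC, hkN⟩ := hk k le_rfl
  -- sign lemma
  obtain ⟨ε, hε⟩ : ∃ ε : F, ∀ x y, b x (u y) = ε * b (u x) y := by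
    rcases hu with h | h
    · exact ⟨1, fun x y => by rw [one_mul, h]⟩
    · exact ⟨-1, fun x y => by rw [h x y]; ring⟩
  have hpow : ∀ (m : ℕ) (x y : V), b x ((u ^ m) y) = ε ^ m * b ((u ^ m) x) y := by
    intro m
    induction m with
    | zero => intro x y; simp
    | succ m ih =>
      intro x y
      have h1 : (u ^ (m + 1)) y = u ((u ^ m) y) := by
        rw [pow_succ']; rfl
      have h2 : (u ^ (m + 1)) x = (u ^ m) (u x) := by
        rw [pow_succ]; rfl
      rw [h1, hε, ih, h2, pow_succ]; ring
  -- Nil ≤ orthogonal of Co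
  have hle : (⨆ n : ℕ, LinearMap.ker (u ^ n)) ≤
      b.orthogonal (⨅ n : ℕ, LinearMap.range (u ^ n)) := by
    intro x hx y hy
    rw [hkN] at hx
    have hy' : y ∈ LinearMap.range (u ^ k) := by rw [← hkC]; exact hy
    obtain ⟨z, rfl⟩ := hy'
    have hx0 : (u ^ k) x = 0 := hx
    have h3 : b x ((u ^ k) z) = ε ^ k * b ((u ^ k) x) z := hpow k x z
    rw [hx0] at h3
    simp only [LinearMap.map_zero, LinearMap.zero_apply, mul_zero] at h3
    rw [hbs]
    exact h3
  -- dimension count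
  have hdim : Module.finrank F (b.orthogonal (⨅ n : ℕ, LinearMap.range (u ^ n))) ≤
      Module.finrank F (⨆ n : ℕ, LinearMap.ker (u ^ n) : Submodule F V) := by
    rw [LinearMap.BilinForm.finrank_orthogonal hb]
    have := Submodule.finrank_add_eq_of_isCompl hcompl
    omega
  have heq : (⨆ n : ℕ, LinearMap.ker (u ^ n)) =
      b.orthogonal (⨅ n : ℕ, LinearMap.range (u ^ n)) :=
    Submodule.eq_of_le_of_finrank_le hle hdim
  refine ⟨?_, hcompl, ?_, ?_⟩
  · intro x
    constructor
    · intro hx y hy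
      exact hrefl y x ((heq ▸ hx) y hy)
    · intro h
      rw [heq]
      intro y hy
      exact hrefl x y (h y hy)
  · intro x hx
    rw [Submodule.mem_iInf] at hx ⊢
    intro n
    obtain ⟨z, hz⟩ := hx n
    refine ⟨u z, ?_⟩
    rw [← hz, ← Module.End.mul_apply, ← Module.End.mul_apply, ← pow_succ, ← pow_succ']
  · intro x hx
    rw [hkN] at hx ⊢
    have h4 : (u ^ k) (u x) = u ((u ^ k) x) := by
      rw [← Module.End.mul_apply, ← Module.End.mul_apply, ← pow_succ, ← pow_succ']
    rw [LinearMap.mem_ker, h4, hx]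
    simp
end
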